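/- Let (m_i)_{i∈ℕ} be a strictly increasing sequence of natural numbers and suppose that for each i ≥ 1 the interval [m_i, m_{i+1}) is partitioned into two sets u_{0,i} and u_{1,i}. Define J = { d̄ ∈ divs : there exists h ∈ {0,1} such that for all but finitely many i ≥ 1, d_ℓ = 0 for every ℓ ∈ u_{h,i} }. Then J is dense in (divs, ≤*): for every d̄ ∈ divs there exists ē ∈ J with ē ≤* d̄. -/

import Mathlib

open Filter

/-- `Divs c` says that `c` is a sequence of nonnegative reals converging to `0`
whose series diverges, i.e. `c ∈ divs`. -/
def Divs (c : ℕ → ℝ) : Prop :=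
  (∀ n, 0 ≤ c n) ∧ Tendsto c atTop (nhds 0) ∧
    Tendsto (fun N => ∑ n ∈ Finset.range N, c n) atTop atTop

/-- `LeStar d c` is the eventual dominance relation `d ≤* c`. -/
def LeStar (d c : ℕ → ℝ) : Prop := ∀ᶠ n in atTop, d n ≤ c n

/-!
Let `U_h = ⋃_{i ≥ 1} u_{h,i}` and let `e_h` be `d` with the entries on `U_h` set to zero.
Since `U_0` and `U_1` are disjoint, `d ≤ e_0 + e_1`, so `e_0` and `e_1` cannot both be
summable; a non-summable one is in `divs` (it lies between `0` and `d`), belongs to `J`,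
and is below `d`.
-/

open Set

theorem Monotone.disjoint_biUnion_of_subset_Ico {m : ℕ → ℕ} (hm : Monotone m) {s t : ℕ → Set ℕ}
    {I : Set ℕ} (hs : ∀ i ∈ I, s i ⊆ Ico (m i) (m (i + 1)))
    (ht : ∀ i ∈ I, t i ⊆ Ico (m i) (m (i + 1))) (hst : ∀ i ∈ I, Disjoint (s i) (t i)) :
    Disjoint (⋃ i ∈ I, s i) (⋃ i ∈ I, t i) := by
  refine disjoint_iUnion₂_left.2 fun i hi => disjoint_iUnion₂_right.2 fun j hj => ?_
  rcases eq_or_ne i j with rfl | hij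
  · exact hst i hi
  · exact Disjoint.mono (hs i hi) (ht j hj) (hm.pairwise_disjoint_on_Ico_succ hij)

theorem not_summable_indicator_compl_or {α : Type*} {f : α → ℝ} (hf : 0 ≤ f)
    (hns : ¬ Summable f) {A B : Set α} (hAB : Disjoint A B) :
    ¬ Summable (Aᶜ.indicator f) ∨ ¬ Summable (Bᶜ.indicator f) := by
  by_contra! hsum
  have hle : ∀ x, f x ≤ Aᶜ.indicator f x + Bᶜ.indicator f x := by
    intro x
    by_cases hA : x ∈ A
    · have hB : x ∉ B := hAB.notMem_of_mem_left hA
      simp [hA, hB]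
    · simp [hA, indicator_nonneg fun y _ => hf y]
  exact hns ((hsum.1.add hsum.2).of_nonneg_of_le hf hle)

namespace Divs

variable {d : ℕ → ℝ}

theorem nonneg (hd : Divs d) : 0 ≤ d := hd.1

theorem not_summable (hd : Divs d) : ¬ Summable d :=
  (not_summable_iff_tendsto_nat_atTop_of_nonneg hd.nonneg).2 hd.2.2

theorem indicator (hd : Divs d) {s : Set ℕ} (hs : ¬ Summable (s.indicator d)) :
    Divs (s.indicator d) := by
  have h0 : ∀ n, 0 ≤ s.indicator d n := indicator_nonneg fun k _ => hd.nonneg k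
  have hle : ∀ n, s.indicator d n ≤ d n := indicator_le_self' fun k _ => hd.nonneg k
  exact ⟨h0, tendsto_of_tendsto_of_tendsto_of_le_of_le tendsto_const_nhds hd.2.1 h0 hle,
    (not_summable_iff_tendsto_nat_atTop_of_nonneg h0).1 hs⟩

end Divs

theorem leStar_indicator {d : ℕ → ℝ} (hd : 0 ≤ d) (s : Set ℕ) : LeStar (s.indicator d) d :=
  Eventually.of_forall <| indicator_le_self' fun k _ => hd k

/-- If each interval `[m_i, m_{i+1})` (for `i ≥ 1`) is partitioned into `u_{0,i}`
and `u_{1,i}`, then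
`J = { d ∈ divs : ∃ h, for all but finitely many i ≥ 1, d↾u_{h,i} ≡ 0 }`
is dense in `(divs, ≤*)`. -/
theorem J_dense (m : ℕ → ℕ) (hm : StrictMono m) (u : Bool → ℕ → Set ℕ)
    (hcup : ∀ i, 1 ≤ i → u false i ∪ u true i = Set.Ico (m i) (m (i + 1)))
    (hcap : ∀ i, 1 ≤ i → u false i ∩ u true i = ∅)
    (d : ℕ → ℝ) (hd : Divs d) :
    ∃ e : ℕ → ℝ,
      (Divs e ∧ ∃ h : Bool, ∀ᶠ i in atTop, ∀ ℓ ∈ u h i, e ℓ = 0) ∧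
      LeStar e d := by
  set U : Bool → Set ℕ := fun h => ⋃ i ∈ Ici 1, u h i
  have hU : Disjoint (U false) (U true) :=
    hm.monotone.disjoint_biUnion_of_subset_Ico
      (fun i hi => hcup i hi ▸ subset_union_left) (fun i hi => hcup i hi ▸ subset_union_right)
      (fun i hi => disjoint_iff_inter_eq_empty.2 (hcap i hi))
  obtain ⟨h, hh⟩ : ∃ h, ¬ Summable ((U h)ᶜ.indicator d) := by
    rcases not_summable_indicator_compl_or hd.nonneg hd.not_summable hU with h | h
    exacts [⟨false, h⟩, ⟨true, h⟩]
  refine ⟨(U h)ᶜ.indicator d, ⟨hd.indicator hh, h, ?_⟩, leStar_indicator hd.nonneg _⟩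
  filter_upwards [eventually_ge_atTop 1] with i hi ℓ hℓ
  exact indicator_of_notMem (not_not.2 (mem_biUnion (x := i) hi hℓ)) d
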